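/- arXiv:2104.15062 — 7 statements merged into one kernel-verified Lean document; each statement's English description precedes it below -/
import Mathlib

section
/- (Equilibrium spot price.) Suppose real numbers P and q_1,…,q_n satisfy the inverse demand equation P = γ̂ − β Σ_i (q_i + q_i^F) and q_i = τ_i (P − b_i − c_i q_i^F − η_i P^{CO2}) for every i. Then P = φ [ γ̂ + β Σ_i τ_i (b_i + c_i q_i^F + η_i P^{CO2}) − β Σ_i q_i^F ]. -/
/-- `tau β δ c i = 1 / (β (1 + δ_i) + c_i)`. -/
noncomputable def tau {n : ℕ} (β : ℝ) (δ c : Fin n → ℝ) (i : Fin n) : ℝ :=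
  1 / (β * (1 + δ i) + c i)

/-- `phi β δ c = 1 / (1 + β Σ_i τ_i)`. -/
noncomputable def phi {n : ℕ} (β : ℝ) (δ c : Fin n → ℝ) : ℝ :=
  1 / (1 + β * ∑ i, tau β δ c i)

/-- Equilibrium spot price: if `P = γ̂ − β Σ_i (q_i + q_i^F)` and
`q_i = τ_i (P − b_i − c_i q_i^F − η_i P^{CO2})` for every `i`, then
`P = φ [ γ̂ + β Σ_i τ_i (b_i + c_i q_i^F + η_i P^{CO2}) − β Σ_i q_i^F ]`. -/
theorem stmt_1 {n : ℕ} (β γhat PCO2 P : ℝ) (qF b c η δ q : Fin n → ℝ)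
    (hβ : 0 < β) (hc : ∀ i, 0 ≤ c i)
    (hpos : ∀ i, 0 < β * (1 + δ i) + c i)
    (hdemand : P = γhat - β * ∑ i, (q i + qF i))
    (hfoc : ∀ i, q i = tau β δ c i * (P - b i - c i * qF i - η i * PCO2)) :
    P = phi β δ c *
      (γhat + β * ∑ i, tau β δ c i * (b i + c i * qF i + η i * PCO2)
        - β * ∑ i, qF i) := by
  have htau : ∀ i, 0 < tau β δ c i := fun i => by
    simpa [tau] using one_div_pos.mpr (hpos i)
  have hS : (0:ℝ) < 1 + β * ∑ i, tau β δ c i := by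
    have : 0 ≤ ∑ i, tau β δ c i := Finset.sum_nonneg fun i _ => (htau i).le
    nlinarith
  have key : P * (1 + β * ∑ i, tau β δ c i)
      = γhat + β * ∑ i, tau β δ c i * (b i + c i * qF i + η i * PCO2)
        - β * ∑ i, qF i := by
    have hsum : ∑ i, (q i + qF i)
        = (∑ i, tau β δ c i) * P
          - ∑ i, tau β δ c i * (b i + c i * qF i + η i * PCO2)
          + ∑ i, qF i := by
      rw [Finset.sum_add_distrib, Finset.sum_mul, ← Finset.sum_sub_distrib]
      congr 1
      apply Finset.sum_congr rfl
      intro i _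
      rw [hfoc i]; ring
    rw [hsum] at hdemand
    linarith [hdemand]
  rw [phi, one_div, inv_mul_eq_div, eq_div_iff hS.ne']
  linarith [key]
end

section
/- (Equilibrium spot quantities.) Suppose real numbers P and q_1,…,q_n satisfy the inverse demand equation P = γ̂ − β Σ_i (q_i + q_i^F) and q_i = τ_i (P − b_i − c_i q_i^F − η_i P^{CO2}) for every i. Then for every i, q_i = τ_i φ [ γ̂ + β Σ_k τ_k (b_k + c_k q_k^F + η_k P^{CO2}) − β Σ_k q_k^F ] − τ_i (b_i + c_i q_i^F + η_i P^{CO2}). -/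
/-- Equilibrium spot quantities: if `P = γ̂ − β Σ_i (q_i + q_i^F)` and
`q_i = τ_i (P − b_i − c_i q_i^F − η_i P^{CO2})` for every `i`, then for every `i`,
`q_i = τ_i φ [ γ̂ + β Σ_k τ_k (b_k + c_k q_k^F + η_k P^{CO2}) − β Σ_k q_k^F ]
      − τ_i (b_i + c_i q_i^F + η_i P^{CO2})`. -/
theorem stmt_2 {n : ℕ} (β γhat PCO2 P : ℝ) (qF b c η δ q : Fin n → ℝ)
    (hβ : 0 < β) (hc : ∀ i, 0 ≤ c i)
    (hpos : ∀ i, 0 < β * (1 + δ i) + c i)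
    (hdemand : P = γhat - β * ∑ i, (q i + qF i))
    (hfoc : ∀ i, q i = tau β δ c i * (P - b i - c i * qF i - η i * PCO2)) :
    ∀ i, q i =
      tau β δ c i * phi β δ c *
        (γhat + β * ∑ k, tau β δ c k * (b k + c k * qF k + η k * PCO2)
          - β * ∑ k, qF k)
      - tau β δ c i * (b i + c i * qF i + η i * PCO2) := by
  have hτpos : ∀ k, 0 < tau β δ c k := fun k => by
    have := hpos k
    unfold tau
    positivity
  have hTpos : 0 < 1 + β * ∑ k, tau β δ c k := by
    have : 0 ≤ ∑ k, tau β δ c k := Finset.sum_nonneg fun k _ => (hτpos k).le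
    nlinarith
  -- sum of quantities
  have hsumq : ∑ k, q k = (∑ k, tau β δ c k) * P
      - ∑ k, tau β δ c k * (b k + c k * qF k + η k * PCO2) := by
    rw [Finset.sum_mul, ← Finset.sum_sub_distrib]
    refine Finset.sum_congr rfl fun k _ => ?_
    rw [hfoc k]; ring
  -- price formula
  have hP : P * (1 + β * ∑ k, tau β δ c k) =
      γhat + β * ∑ k, tau β δ c k * (b k + c k * qF k + η k * PCO2)
        - β * ∑ k, qF k := by
    have h1 : ∑ k, (q k + qF k) = ∑ k, q k + ∑ k, qF k := Finset.sum_add_distrib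
    rw [h1, hsumq] at hdemand
    linarith [hdemand]
  have hPval : P = phi β δ c *
      (γhat + β * ∑ k, tau β δ c k * (b k + c k * qF k + η k * PCO2)
        - β * ∑ k, qF k) := by
    rw [phi, ← hP]
    field_simp
  intro i
  rw [hfoc i, hPval]
  ring
end

section
/- (Equilibrium spot emission allowances.) Suppose real numbers P and q_1,…,q_n satisfy the inverse demand equation P = γ̂ − β Σ_i (q_i + q_i^F) and q_i = τ_i (P − b_i − c_i q_i^F − η_i P^{CO2}) for every i, and for each generator i with futures emission commitment ε_i^F define its spot emission trading as ε_i^S := η_i Σ_k (q_k + q_k^F) − ε_i^F. Then for every i, ε_i^S = η_i Σ_k q_k^F + η_i Σ_k τ_k φ [ γ̂ + β Σ_l τ_l (b_l + c_l q_l^F + η_l P^{CO2}) ] − η_i (Σ_k τ_k) φ β Σ_k q_k^F − η_i Σ_k τ_k (b_k + c_k q_k^F + η_k P^{CO2}) − ε_i^F. -/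
/-!
Summing the first-order conditions `q_i = τ_i (P − a_i)` gives `Σ q = T P − A` with
`T = Σ τ_k` and `A = Σ τ_k a_k`; substituting the inverse demand for `P` leaves one linear
equation `(1 + β T) Σ q = T γ̂ − T β Σ q^F − A` for the aggregate spot output, whose
coefficient is positive because `β > 0` and every `τ_k > 0`. Then `ε_i^S = η_i (Σ q + Σ q^F) − ε_i^F`.
-/

theorem sum_eq_mul_sub_of_forall_eq_mul_sub {ι : Type*} (s : Finset ι) (q τ a : ι → ℝ) (P : ℝ)
    (h : ∀ k ∈ s, q k = τ k * (P - a k)) :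
    ∑ k ∈ s, q k = (∑ k ∈ s, τ k) * P - ∑ k ∈ s, τ k * a k := by
  rw [Finset.sum_mul, ← Finset.sum_sub_distrib]
  exact Finset.sum_congr rfl fun k hk => by rw [h k hk]; ring

theorem output_eq_of_supply_demand {β γ T A F S P : ℝ} (hT : 1 + β * T ≠ 0)
    (hsupply : S = T * P - A) (hdemand : P = γ - β * (S + F)) :
    S = T * (1 / (1 + β * T)) * (γ + β * A) - T * (1 / (1 + β * T)) * β * F - A := by
  have hφ : 1 / (1 + β * T) * (1 + β * T) = 1 := one_div_mul_cancel hT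
  linear_combination (1 / (1 + β * T)) * (hsupply + T * hdemand) - (S + A) * hφ

theorem tau_pos {n : ℕ} {β : ℝ} {δ c : Fin n → ℝ} {i : Fin n}
    (h : 0 < β * (1 + δ i) + c i) : 0 < tau β δ c i :=
  one_div_pos.mpr h

theorem one_add_mul_sum_tau_pos {n : ℕ} {β : ℝ} {δ c : Fin n → ℝ} (hβ : 0 < β)
    (hpos : ∀ i, 0 < β * (1 + δ i) + c i) : 0 < 1 + β * ∑ i, tau β δ c i := by
  have hT : 0 ≤ ∑ i, tau β δ c i := Finset.sum_nonneg fun i _ => (tau_pos (hpos i)).le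
  positivity

theorem stmt_3_general {n : ℕ} (β γhat PCO2 P : ℝ) (qF εF b c η δ q εS : Fin n → ℝ)
    (hβ : 0 < β)
    (hpos : ∀ i, 0 < β * (1 + δ i) + c i)
    (hdemand : P = γhat - β * ∑ i, (q i + qF i))
    (hfoc : ∀ i, q i = tau β δ c i * (P - b i - c i * qF i - η i * PCO2))
    (hεS : ∀ i, εS i = η i * (∑ k, (q k + qF k)) - εF i) :
    ∀ i, εS i =
      η i * ∑ k, qF k
      + η i * (∑ k, tau β δ c k) * phi β δ c *
          (γhat + β * ∑ l, tau β δ c l * (b l + c l * qF l + η l * PCO2))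
      - η i * (∑ k, tau β δ c k) * phi β δ c * β * ∑ k, qF k
      - η i * ∑ k, tau β δ c k * (b k + c k * qF k + η k * PCO2)
      - εF i := by
  intro i
  have hsupply := sum_eq_mul_sub_of_forall_eq_mul_sub Finset.univ q (tau β δ c)
    (fun k => b k + c k * qF k + η k * PCO2) P fun k _ => by rw [hfoc k]; ring
  rw [Finset.sum_add_distrib] at hdemand hεS
  have hS := output_eq_of_supply_demand (one_add_mul_sum_tau_pos hβ hpos).ne' hsupply hdemand
  rw [hεS i, hS, phi]
  ring

/-- Equilibrium spot emission allowances: if `P = γ̂ − β Σ_i (q_i + q_i^F)` and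
`q_i = τ_i (P − b_i − c_i q_i^F − η_i P^{CO2})` for every `i`, and the spot emission
trading of generator `i` is `ε_i^S = η_i Σ_k (q_k + q_k^F) − ε_i^F`, then for every `i`,
`ε_i^S = η_i Σ_k q_k^F + η_i Σ_k τ_k φ [ γ̂ + β Σ_l τ_l (b_l + c_l q_l^F + η_l P^{CO2}) ]
        − η_i (Σ_k τ_k) φ β Σ_k q_k^F − η_i Σ_k τ_k (b_k + c_k q_k^F + η_k P^{CO2}) − ε_i^F`. -/
theorem stmt_3 {n : ℕ} (β γhat PCO2 P : ℝ) (qF εF b c η δ q εS : Fin n → ℝ)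
    (hβ : 0 < β) (hc : ∀ i, 0 ≤ c i)
    (hpos : ∀ i, 0 < β * (1 + δ i) + c i)
    (hdemand : P = γhat - β * ∑ i, (q i + qF i))
    (hfoc : ∀ i, q i = tau β δ c i * (P - b i - c i * qF i - η i * PCO2))
    (hεS : ∀ i, εS i = η i * (∑ k, (q k + qF k)) - εF i) :
    ∀ i, εS i =
      η i * ∑ k, qF k
      + η i * (∑ k, tau β δ c k) * phi β δ c *
          (γhat + β * ∑ l, tau β δ c l * (b l + c l * qF l + η l * PCO2))
      - η i * (∑ k, tau β δ c k) * phi β δ c * β * ∑ k, qF k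
      - η i * ∑ k, tau β δ c k * (b k + c k * qF k + η k * PCO2)
      - εF i :=
  stmt_3_general β γhat PCO2 P qF εF b c η δ q εS hβ hpos hdemand hfoc hεS
end

section
/- (Uniqueness of the spot equilibrium.) There exists exactly one tuple of real numbers (P, q_1,…,q_n) satisfying simultaneously the inverse demand equation P = γ̂ − β Σ_i (q_i + q_i^F) and, for every i, the first-order condition −β(1+δ_i) q_i + P − b_i − c_i(q_i^F + q_i) − η_i P^{CO2} = 0; it is given by P = φ [ γ̂ + β Σ_i τ_i (b_i + c_i q_i^F + η_i P^{CO2}) − β Σ_i q_i^F ] and q_i = τ_i (P − b_i − c_i q_i^F − η_i P^{CO2}). -/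
/-- Uniqueness of the spot equilibrium: there is exactly one tuple `(P, q_1, …, q_n)`
satisfying the inverse demand equation and all first-order conditions, and it is given by
`P = φ [ γ̂ + β Σ_i τ_i (b_i + c_i q_i^F + η_i P^{CO2}) − β Σ_i q_i^F ]` together with
`q_i = τ_i (P − b_i − c_i q_i^F − η_i P^{CO2})`. -/
theorem stmt_4 {n : ℕ} (β γhat PCO2 : ℝ) (qF b c η δ : Fin n → ℝ)
    (hβ : 0 < β) (hc : ∀ i, 0 ≤ c i)
    (hpos : ∀ i, 0 < β * (1 + δ i) + c i) :
    (∃! Pq : ℝ × (Fin n → ℝ),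
        Pq.1 = γhat - β * ∑ i, (Pq.2 i + qF i) ∧
        ∀ i, -β * (1 + δ i) * Pq.2 i + Pq.1 - b i
              - c i * (qF i + Pq.2 i) - η i * PCO2 = 0) ∧
    (let Pstar : ℝ :=
      phi β δ c *
        (γhat + β * ∑ i, tau β δ c i * (b i + c i * qF i + η i * PCO2)
          - β * ∑ i, qF i)
     let qstar : Fin n → ℝ :=
      fun i => tau β δ c i * (Pstar - b i - c i * qF i - η i * PCO2)
     Pstar = γhat - β * ∑ i, (qstar i + qF i) ∧
      ∀ i, -β * (1 + δ i) * qstar i + Pstar - b i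
            - c i * (qF i + qstar i) - η i * PCO2 = 0) := by
  have hd : ∀ i, β * (1 + δ i) + c i ≠ 0 := fun i => (hpos i).ne'
  have htau : ∀ i, 0 < tau β δ c i := fun i => by
    unfold tau; exact div_pos one_pos (hpos i)
  have hS : (0:ℝ) ≤ ∑ i, tau β δ c i :=
    Finset.sum_nonneg fun i _ => (htau i).le
  have hD : (0:ℝ) < 1 + β * ∑ i, tau β δ c i := by nlinarith
  have hφ : phi β δ c * (1 + β * ∑ i, tau β δ c i) = 1 := by
    unfold phi; field_simp
  set τ : Fin n → ℝ := tau β δ c with hτdef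
  set k : Fin n → ℝ := fun i => b i + c i * qF i + η i * PCO2 with hk
  set K : ℝ := γhat + β * ∑ i, τ i * k i - β * ∑ i, qF i with hK
  set P0 : ℝ := phi β δ c * K with hP0
  set q0 : Fin n → ℝ := fun i => τ i * (P0 - b i - c i * qF i - η i * PCO2) with hq0
  -- pointwise FOC equivalence
  have foc_pt : ∀ (P x : ℝ) (i : Fin n),
      (-β * (1 + δ i) * x + P - b i - c i * (qF i + x) - η i * PCO2 = 0) ↔
      x = τ i * (P - b i - c i * qF i - η i * PCO2) := by
    intro P x i
    have ht : τ i = 1 / (β * (1 + δ i) + c i) := rfl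
    rw [ht]
    rw [div_mul_eq_mul_div, one_mul, eq_div_iff (hd i)]
    constructor <;> intro h <;> nlinarith [h]
  -- sum identity under FOC
  have sum_id : ∀ (P : ℝ) (q : Fin n → ℝ),
      (∀ i, q i = τ i * (P - b i - c i * qF i - η i * PCO2)) →
      ∑ i, (q i + qF i) = P * (∑ i, τ i) - (∑ i, τ i * k i) + ∑ i, qF i := by
    intro P q hq
    have : ∑ i, (q i + qF i) = ∑ i, ((τ i * P - τ i * k i) + qF i) := by
      apply Finset.sum_congr rfl
      intro i _
      rw [hq i]
      simp only [hk]
      ring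
    rw [this]
    rw [Finset.sum_add_distrib, Finset.sum_sub_distrib, ← Finset.sum_mul]
    ring
  -- P0 satisfies the key scalar equation
  have hP0eq : P0 * (1 + β * ∑ i, τ i) = K := by
    rw [hP0]
    calc phi β δ c * K * (1 + β * ∑ i, τ i)
        = (phi β δ c * (1 + β * ∑ i, tau β δ c i)) * K := by ring
      _ = K := by rw [hφ]; ring
  -- the candidate satisfies the demand equation
  have hdem0 : P0 = γhat - β * ∑ i, (q0 i + qF i) := by
    rw [sum_id P0 q0 (fun i => rfl)]
    rw [hK] at hP0eq
    nlinarith [hP0eq]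
  have hfoc0 : ∀ i, -β * (1 + δ i) * q0 i + P0 - b i
      - c i * (qF i + q0 i) - η i * PCO2 = 0 :=
    fun i => (foc_pt P0 (q0 i) i).mpr rfl
  -- uniqueness
  have uniq : ∀ (P : ℝ) (q : Fin n → ℝ),
      (P = γhat - β * ∑ i, (q i + qF i)) →
      (∀ i, -β * (1 + δ i) * q i + P - b i - c i * (qF i + q i) - η i * PCO2 = 0) →
      P = P0 ∧ q = q0 := by
    intro P q hdem hfoc
    have hq : ∀ i, q i = τ i * (P - b i - c i * qF i - η i * PCO2) :=
      fun i => (foc_pt P (q i) i).mp (hfoc i)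
    have hsum := sum_id P q hq
    have hPeq : P * (1 + β * ∑ i, τ i) = K := by
      rw [hK]
      rw [hsum] at hdem
      nlinarith [hdem]
    have hP : P = P0 := by
      have := hP0eq
      have hDne : (1 + β * ∑ i, τ i) ≠ 0 := ne_of_gt hD
      field_simp at hPeq this
      nlinarith [hPeq, this, sq_nonneg (P - P0)]
    refine ⟨hP, funext fun i => ?_⟩
    rw [hq i, hP, hq0]
  constructor
  · refine ⟨(P0, q0), ⟨hdem0, hfoc0⟩, ?_⟩
    rintro ⟨P, q⟩ ⟨h1, h2⟩
    obtain ⟨hP, hq⟩ := uniq P q h1 h2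
    exact Prod.ext hP hq
  · exact ⟨hdem0, hfoc0⟩
end

section
/- (Spot-only equilibrium quantities.) Suppose real numbers P and q_1,…,q_n satisfy the inverse demand equation P = γ̂ − β Σ_i q_i and q_i = τ_i (P − b_i − η_i P^{CO2}) for every i. Then for every i, q_i = τ_i [ φ ( γ̂ + β Σ_k τ_k (b_k + η_k P^{CO2}) ) − b_i − η_i P^{CO2} ]. -/
/-- Spot-only equilibrium quantities: if `P = γ̂ − β Σ_i q_i` and
`q_i = τ_i (P − b_i − η_i P^{CO2})` for every `i`, then for every `i`,
`q_i = τ_i [ φ ( γ̂ + β Σ_k τ_k (b_k + η_k P^{CO2}) ) − b_i − η_i P^{CO2} ]`. -/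
theorem stmt_8 {n : ℕ} (β γhat PCO2 P : ℝ) (b c η δ q : Fin n → ℝ)
    (hβ : 0 < β) (hc : ∀ i, 0 ≤ c i)
    (hpos : ∀ i, 0 < β * (1 + δ i) + c i)
    (hdemand : P = γhat - β * ∑ i, q i)
    (hfoc : ∀ i, q i = tau β δ c i * (P - b i - η i * PCO2)) :
    ∀ i, q i = tau β δ c i *
      (phi β δ c * (γhat + β * ∑ k, tau β δ c k * (b k + η k * PCO2))
        - b i - η i * PCO2) := by
  have htau : ∀ i, 0 < tau β δ c i := fun i => by
    unfold tau; exact one_div_pos.mpr (hpos i)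
  have hS : 0 < 1 + β * ∑ i, tau β δ c i := by
    have : 0 ≤ ∑ i, tau β δ c i := Finset.sum_nonneg fun i _ => (htau i).le
    nlinarith
  have hP : P = phi β δ c * (γhat + β * ∑ k, tau β δ c k * (b k + η k * PCO2)) := by
    have hsum : ∑ i, q i = (∑ i, tau β δ c i) * P
        - ∑ i, tau β δ c i * (b i + η i * PCO2) := by
      rw [Finset.sum_mul, ← Finset.sum_sub_distrib]
      exact Finset.sum_congr rfl fun i _ => by rw [hfoc i]; ring
    rw [hsum] at hdemand
    rw [phi]
    field_simp
    linarith [hdemand]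
  intro i
  rw [hfoc i, hP]
end

section
/- (Uniqueness of the spot-only equilibrium.) There exists exactly one tuple of real numbers (P, q_1,…,q_n) satisfying simultaneously the inverse demand equation P = γ̂ − β Σ_i q_i and, for every i, the first-order condition −β(1+δ_i) q_i + P − b_i − c_i q_i − η_i P^{CO2} = 0; it is given by P = φ [ γ̂ + β Σ_i τ_i (b_i + η_i P^{CO2}) ] and q_i = τ_i (P − b_i − η_i P^{CO2}). -/
/-- Uniqueness of the spot-only equilibrium: there is exactly one tuple
`(P, q_1, …, q_n)` satisfying the inverse demand equation `P = γ̂ − β Σ_i q_i`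
and all first-order conditions, and it is given by
`P = φ [ γ̂ + β Σ_i τ_i (b_i + η_i P^{CO2}) ]` together with
`q_i = τ_i (P − b_i − η_i P^{CO2})`. -/
theorem stmt_10 {n : ℕ} (β γhat PCO2 : ℝ) (b c η δ : Fin n → ℝ)
    (hβ : 0 < β) (hc : ∀ i, 0 ≤ c i)
    (hpos : ∀ i, 0 < β * (1 + δ i) + c i) :
    (∃! Pq : ℝ × (Fin n → ℝ),
        Pq.1 = γhat - β * ∑ i, Pq.2 i ∧
        ∀ i, -β * (1 + δ i) * Pq.2 i + Pq.1 - b i - c i * Pq.2 i - η i * PCO2 = 0) ∧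
    (let Pstar : ℝ :=
      phi β δ c * (γhat + β * ∑ i, tau β δ c i * (b i + η i * PCO2))
     let qstar : Fin n → ℝ := fun i => tau β δ c i * (Pstar - b i - η i * PCO2)
     Pstar = γhat - β * ∑ i, qstar i ∧
      ∀ i, -β * (1 + δ i) * qstar i + Pstar - b i - c i * qstar i - η i * PCO2 = 0) := by
  have htau_pos : ∀ i, 0 < tau β δ c i := fun i => by
    unfold tau; exact one_div_pos.mpr (hpos i)
  have hD : 0 < 1 + β * ∑ i, tau β δ c i := by
    have : 0 ≤ ∑ i, tau β δ c i := Finset.sum_nonneg fun i _ => (htau_pos i).le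
    nlinarith
  have hφ : phi β δ c * (1 + β * ∑ i, tau β δ c i) = 1 := by
    unfold phi; field_simp
  -- FOC equivalence
  have hfoc : ∀ (P : ℝ) (q : Fin n → ℝ) (i : Fin n),
      (-β * (1 + δ i) * q i + P - b i - c i * q i - η i * PCO2 = 0) ↔
        q i = tau β δ c i * (P - b i - η i * PCO2) := by
    intro P q i
    have h := hpos i
    rw [tau]
    constructor
    · intro h0
      field_simp
      nlinarith [h0]
    · intro h0
      rw [h0]
      field_simp
      ring
  set Pstar : ℝ :=
    phi β δ c * (γhat + β * ∑ i, tau β δ c i * (b i + η i * PCO2)) with hP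
  set qstar : Fin n → ℝ := fun i => tau β δ c i * (Pstar - b i - η i * PCO2) with hq
  have hsum : ∑ i, qstar i
      = (∑ i, tau β δ c i) * Pstar - ∑ i, tau β δ c i * (b i + η i * PCO2) := by
    rw [Finset.sum_mul, ← Finset.sum_sub_distrib]
    apply Finset.sum_congr rfl
    intro i _
    simp only [hq]
    ring
  have hdemand : Pstar = γhat - β * ∑ i, qstar i := by
    rw [hsum]
    have : Pstar * (1 + β * ∑ i, tau β δ c i)
        = γhat + β * ∑ i, tau β δ c i * (b i + η i * PCO2) := by
      rw [hP]
      linear_combination (γhat + β * ∑ i, tau β δ c i * (b i + η i * PCO2)) * hφ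
    nlinarith [this]
  refine ⟨⟨(Pstar, qstar), ⟨hdemand, fun i => (hfoc Pstar qstar i).2 rfl⟩, ?_⟩,
    hdemand, fun i => (hfoc Pstar qstar i).2 rfl⟩
  rintro ⟨P, q⟩ ⟨hd, hf⟩
  have hqi : ∀ i, q i = tau β δ c i * (P - b i - η i * PCO2) :=
    fun i => (hfoc P q i).1 (hf i)
  have hsumq : ∑ i, q i
      = (∑ i, tau β δ c i) * P - ∑ i, tau β δ c i * (b i + η i * PCO2) := by
    rw [Finset.sum_mul, ← Finset.sum_sub_distrib]
    apply Finset.sum_congr rfl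
    intro i _
    rw [hqi i]; ring
  have hPP : P = Pstar := by
    have h1 : P * (1 + β * ∑ i, tau β δ c i)
        = γhat + β * ∑ i, tau β δ c i * (b i + η i * PCO2) := by
      rw [hsumq] at hd; nlinarith [hd]
    have h2 : Pstar * (1 + β * ∑ i, tau β δ c i)
        = γhat + β * ∑ i, tau β δ c i * (b i + η i * PCO2) := by
      rw [hP]
      linear_combination (γhat + β * ∑ i, tau β δ c i * (b i + η i * PCO2)) * hφ
    have := h1.trans h2.symm
    exact mul_right_cancel₀ (ne_of_gt hD) this
  ext
  · exact hPP
  · rename_i i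
    show q i = qstar i
    rw [hqi i, hPP]
end

section
/- (Total conventional output in the spot-only equilibrium is strictly decreasing in the CO2 price.) Define q_i(p) = τ_i [ φ ( γ̂ + β Σ_k τ_k (b_k + η_k p) ) − b_i − η_i p ], the spot-only equilibrium quantity of generator i as a function of the CO2 allowance price p, and let S(p) = Σ_i q_i(p). Then S is differentiable with constant derivative S'(p) = −φ Σ_i τ_i η_i; in particular, if η_i ≥ 0 for all i and Σ_i τ_i η_i > 0, then S is strictly decreasing on ℝ. -/
/-- Total conventional output in the spot-only equilibrium is strictly decreasing
in the CO2 price: with `q_i(p) = τ_i [ φ ( γ̂ + β Σ_k τ_k (b_k + η_k p) ) − b_i − η_i p ]`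
and `S(p) = Σ_i q_i(p)`, the function `S` is differentiable with constant derivative
`S'(p) = −φ Σ_i τ_i η_i`; in particular, if `η_i ≥ 0` for all `i` and
`Σ_i τ_i η_i > 0`, then `S` is strictly decreasing on `ℝ`. -/
theorem stmt_17 {n : ℕ} (β γhat : ℝ) (b c η δ : Fin n → ℝ)
    (hβ : 0 < β) (hc : ∀ i, 0 ≤ c i)
    (hpos : ∀ i, 0 < β * (1 + δ i) + c i) :
    let S : ℝ → ℝ := fun p => ∑ i, tau β δ c i *
      (phi β δ c * (γhat + β * ∑ k, tau β δ c k * (b k + η k * p))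
        - b i - η i * p)
    (∀ p : ℝ, HasDerivAt S (-(phi β δ c * ∑ i, tau β δ c i * η i)) p) ∧
      ((∀ i, 0 ≤ η i) → 0 < ∑ i, tau β δ c i * η i → StrictAnti S) := by
  intro S
  set T : ℝ := ∑ i, tau β δ c i with hT
  set E : ℝ := ∑ i, tau β δ c i * η i with hE
  set A : ℝ := ∑ k, tau β δ c k * b k with hA
  have htau : ∀ i, 0 < tau β δ c i := fun i => by
    exact one_div_pos.mpr (hpos i)
  have hTpos : 0 < 1 + β * T := by
    have : 0 ≤ T := Finset.sum_nonneg fun i _ => (htau i).le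
    positivity
  have hφpos : 0 < phi β δ c := by
    unfold phi; rw [← hT]; positivity
  have hφ : phi β δ c * (1 + β * T) = 1 := by
    unfold phi; rw [← hT]; field_simp
  set C : ℝ := ∑ i, tau β δ c i * (phi β δ c * (γhat + β * A) - b i) with hC
  have key : ∀ p, S p = C - (phi β δ c * E) * p := by
    intro p
    have h1 : ∑ k, tau β δ c k * (b k + η k * p) = A + E * p := by
      rw [hA, hE, Finset.sum_mul, ← Finset.sum_add_distrib]
      exact Finset.sum_congr rfl fun k _ => by ring
    show (∑ i, tau β δ c i *
      (phi β δ c * (γhat + β * ∑ k, tau β δ c k * (b k + η k * p))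
        - b i - η i * p)) = C - (phi β δ c * E) * p
    rw [h1]
    have h2 : ∀ i : Fin n, tau β δ c i *
        (phi β δ c * (γhat + β * (A + E * p)) - b i - η i * p)
        = tau β δ c i * (phi β δ c * (γhat + β * A) - b i)
          + (tau β δ c i * (phi β δ c * β * E) - tau β δ c i * η i) * p := by
      intro i; ring
    rw [Finset.sum_congr rfl fun i _ => h2 i, Finset.sum_add_distrib,
      ← Finset.sum_mul, Finset.sum_sub_distrib, ← Finset.sum_mul, ← hC, ← hE, ← hT]
    have : T * (phi β δ c * β * E) - E = -(phi β δ c * E) := by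
      have h3 : phi β δ c * β * T = 1 - phi β δ c := by linarith [hφ]
      linear_combination E * h3
    rw [this]; ring
  constructor
  · intro p
    have h : HasDerivAt (fun p : ℝ => C - (phi β δ c * E) * p)
        (-(phi β δ c * E)) p := by
      simpa using ((hasDerivAt_id p).const_mul (phi β δ c * E)).const_sub C
    have hSeq : S = fun p => C - (phi β δ c * E) * p := funext key
    rw [hSeq]
    exact h
  · intro _ hEpos x y hxy
    rw [key x, key y]
    have : phi β δ c * E * x < phi β δ c * E * y := by
      have : 0 < phi β δ c * E := mul_pos hφpos (hE ▸ hEpos)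
      exact (mul_lt_mul_iff_right₀ this).mpr hxy
    linarith
end
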